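/- Define the linear map Ψ₃ on M₃(ℂ) by Ψ₃(X) = [[x₁₁+x₃₃, −x₁₂, −x₁₃], [−x₂₁, x₁₁+x₂₂, −x₃₂], [−x₃₁, −x₂₃, x₂₂+x₃₃]]. Then Ψ₃ is a positive linear map: Ψ₃(X) is positive semidefinite for every positive semidefinite X ∈ M₃(ℂ). -/

import Mathlib

open Matrix Complex ComplexOrder

/-- The map Ψ₃ of the paper: it agrees with the Choi map except that its (2,3) entry is
−x₃₂ and its (3,2) entry is −x₂₃. -/
noncomputable def Psi3 (X : Matrix (Fin 3) (Fin 3) ℂ) : Matrix (Fin 3) (Fin 3) ℂ :=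
  !![X 0 0 + X 2 2, -X 0 1, -X 0 2;
     -X 1 0, X 0 0 + X 1 1, -X 2 1;
     -X 2 0, -X 1 2, X 1 1 + X 2 2]

/-!
The off-diagonal entries of `Psi3 X` have the same moduli as those of `Φ X` for the Choi map `Φ`,
and for positive semidefinite `X` they satisfy `‖X i j‖ ≤ d i * d j` with `d i = √(X i i)`.
By the triangle inequality, `⟪v, Psi3 X v⟫ ≥ ⟪|v|, Φ (d dᵀ) |v|⟫`, so it suffices that the real
matrix `Φ (d dᵀ)` is copositive. With `u = d₀a₀, v = d₁a₁, w = d₂a₂, p = d₀a₁, q = d₁a₂, r = d₂a₀`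
this is Choi's inequality `2(uv + vw + wu) ≤ u² + v² + w² + p² + q² + r²` for nonnegative reals
with `uvw = pqr`, which follows, after taking cube roots, from Schur's inequality and AM-GM.
-/

theorem schur_inequality_of_le {a b c : ℝ} (hc : 0 ≤ c) (hcb : c ≤ b) (hba : b ≤ a) :
    0 ≤ a * (a - b) * (a - c) + b * (b - a) * (b - c) + c * (c - a) * (c - b) := by
  nlinarith [mul_nonneg (sq_nonneg (a - b)) (by linarith : 0 ≤ a + b - c),
    mul_nonneg hc (mul_nonneg (sub_nonneg.2 (hcb.trans hba)) (sub_nonneg.2 hcb))]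

theorem schur_inequality {a b c : ℝ} (ha : 0 ≤ a) (hb : 0 ≤ b) (hc : 0 ≤ c) :
    0 ≤ a * (a - b) * (a - c) + b * (b - a) * (b - c) + c * (c - a) * (c - b) := by
  rcases le_total a b with hab | hab <;> rcases le_total b c with hbc | hbc <;>
    rcases le_total a c with hac | hac
  all_goals first
    | linarith [schur_inequality_of_le ha hab hbc] | linarith [schur_inequality_of_le ha hac hbc]
    | linarith [schur_inequality_of_le hb hab hac] | linarith [schur_inequality_of_le hb hbc hac]
    | linarith [schur_inequality_of_le hc hac hab] | linarith [schur_inequality_of_le hc hbc hab]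

theorem three_mul_le_add_cubes {a b c : ℝ} (ha : 0 ≤ a) (hb : 0 ≤ b) (hc : 0 ≤ c) :
    3 * (a * b * c) ≤ a ^ 3 + b ^ 3 + c ^ 3 := by
  nlinarith [mul_nonneg (add_nonneg (add_nonneg ha hb) hc)
    (add_nonneg (add_nonneg (sq_nonneg (a - b)) (sq_nonneg (b - c))) (sq_nonneg (c - a)))]

theorem choi_inequality_of_cubes {x y z α β γ : ℝ} (h : x * y * z = α * β * γ) :
    2 * ((x * y) ^ 3 + (y * z) ^ 3 + (z * x) ^ 3) ≤
      x ^ 6 + y ^ 6 + z ^ 6 + α ^ 6 + β ^ 6 + γ ^ 6 := by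
  have amgm := three_mul_le_add_cubes (sq_nonneg α) (sq_nonneg β) (sq_nonneg γ)
  have schur := schur_inequality (sq_nonneg x) (sq_nonneg y) (sq_nonneg z)
  linear_combination schur + amgm + sq_nonneg (x * y * (x - y)) + sq_nonneg (y * z * (y - z))
    + sq_nonneg (z * x * (z - x)) + 3 * (x * y * z + α * β * γ) * h

theorem choi_inequality {u v w p q r : ℝ} (hu : 0 ≤ u) (hv : 0 ≤ v) (hw : 0 ≤ w)
    (hp : 0 ≤ p) (hq : 0 ≤ q) (hr : 0 ≤ r) (h : u * v * w = p * q * r) :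
    2 * (u * v + v * w + w * u) ≤ u ^ 2 + v ^ 2 + w ^ 2 + p ^ 2 + q ^ 2 + r ^ 2 := by
  have cbrt : ∀ t : ℝ, 0 ≤ t → ∃ s, 0 ≤ s ∧ s ^ 3 = t := fun t ht ↦
    ⟨t ^ ((3 : ℕ)⁻¹ : ℝ), Real.rpow_nonneg ht _, Real.rpow_inv_natCast_pow ht three_ne_zero⟩
  obtain ⟨x, hx, rfl⟩ := cbrt u hu
  obtain ⟨y, hy, rfl⟩ := cbrt v hv
  obtain ⟨z, hz, rfl⟩ := cbrt w hw
  obtain ⟨α, hα, rfl⟩ := cbrt p hp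
  obtain ⟨β, hβ, rfl⟩ := cbrt q hq
  obtain ⟨γ, hγ, rfl⟩ := cbrt r hr
  have hxyz : x * y * z = α * β * γ :=
    (pow_left_inj₀ (by positivity) (by positivity) three_ne_zero).1 (by linear_combination h)
  linear_combination choi_inequality_of_cubes hxyz

/-- `choiMatrix d` is the image of `d dᵀ` under the Choi map. -/
def choiMatrix (d : Fin 3 → ℝ) : Matrix (Fin 3) (Fin 3) ℝ :=
  !![d 0 ^ 2 + d 2 ^ 2, -(d 0 * d 1), -(d 0 * d 2);
     -(d 0 * d 1), d 0 ^ 2 + d 1 ^ 2, -(d 1 * d 2);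
     -(d 0 * d 2), -(d 1 * d 2), d 1 ^ 2 + d 2 ^ 2]

theorem choiMatrix_copositive {d : Fin 3 → ℝ} (hd : 0 ≤ d) {a : Fin 3 → ℝ} (ha : 0 ≤ a) :
    0 ≤ a ⬝ᵥ choiMatrix d *ᵥ a := by
  have key := choi_inequality (mul_nonneg (hd 0) (ha 0)) (mul_nonneg (hd 1) (ha 1))
    (mul_nonneg (hd 2) (ha 2)) (mul_nonneg (hd 0) (ha 1)) (mul_nonneg (hd 1) (ha 2))
    (mul_nonneg (hd 2) (ha 0)) (by ring)
  simp only [dotProduct, mulVec, choiMatrix, of_apply, cons_val', cons_val_fin_one,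
    Fin.sum_univ_three, cons_val_zero, cons_val_one, cons_val]
  linear_combination key

section Comparison

variable {𝕜 n : Type*} [RCLike 𝕜]

open RCLike

theorem Matrix.PosSemidef.norm_apply_le {A : Matrix n n 𝕜} (hA : A.PosSemidef) (i j : n) :
    ‖A i j‖ ≤ √(re (A i i)) * √(re (A j j)) := by
  have hdet := (hA.submatrix ![i, j]).det_nonneg
  rw [det_fin_two] at hdet
  simp only [submatrix_apply, cons_val_zero, cons_val_one] at hdet
  rw [← hA.isHermitian.coe_re_apply_self i, ← hA.isHermitian.coe_re_apply_self j,
    ← hA.isHermitian.apply i j, ← starRingEnd_apply, RCLike.conj_mul, ← RCLike.ofReal_mul,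
    ← RCLike.ofReal_pow, ← RCLike.ofReal_sub, RCLike.ofReal_nonneg, sub_nonneg] at hdet
  rw [← hA.isHermitian.apply i j, norm_star, ← Real.sqrt_mul (nonneg_iff.1 hA.diag_nonneg).1]
  exact Real.le_sqrt_of_sq_le hdet

variable [Fintype n]

theorem Matrix.dotProduct_mulVec_norm_le_re {M : Matrix n n 𝕜} {N : Matrix n n ℝ}
    (hdiag : ∀ i, N i i ≤ re (M i i)) (hoff : ∀ i j, i ≠ j → ‖M i j‖ ≤ -N i j) (v : n → 𝕜) :
    (fun i ↦ ‖v i‖) ⬝ᵥ N *ᵥ (fun i ↦ ‖v i‖) ≤ re (star v ⬝ᵥ M *ᵥ v) := by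
  simp only [dotProduct, mulVec, Finset.mul_sum, map_sum]
  refine Finset.sum_le_sum fun i _ ↦ Finset.sum_le_sum fun j _ ↦ ?_
  obtain rfl | hij := eq_or_ne i j
  · rw [Pi.star_apply, mul_left_comm (star (v i)), ← starRingEnd_apply, RCLike.conj_mul,
      ← RCLike.ofReal_pow, RCLike.re_mul_ofReal]
    nlinarith [hdiag i, sq_nonneg ‖v i‖]
  · calc ‖v i‖ * (N i j * ‖v j‖) ≤ -‖star (v i) * (M i j * v j)‖ := by
          rw [norm_mul, norm_mul, norm_star]
          nlinarith [hoff i j hij, mul_nonneg (norm_nonneg (v i)) (norm_nonneg (v j))]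
      _ ≤ re (star (v i) * (M i j * v j)) := neg_le_of_abs_le (abs_re_le_norm _)

theorem Matrix.IsHermitian.posSemidef_of_copositive_comparison {M : Matrix n n 𝕜}
    (hM : M.IsHermitian) {N : Matrix n n ℝ} (hN : ∀ a : n → ℝ, 0 ≤ a → 0 ≤ a ⬝ᵥ N *ᵥ a)
    (hdiag : ∀ i, N i i ≤ re (M i i)) (hoff : ∀ i j, i ≠ j → ‖M i j‖ ≤ -N i j) :
    M.PosSemidef :=
  .of_dotProduct_mulVec_nonneg hM fun v ↦ nonneg_iff.2
    ⟨(hN _ fun _ ↦ norm_nonneg _).trans (dotProduct_mulVec_norm_le_re hdiag hoff v),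
      hM.im_star_dotProduct_mulVec_self v⟩

end Comparison

theorem isHermitian_Psi3 {X : Matrix (Fin 3) (Fin 3) ℂ} (hX : X.IsHermitian) :
    (Psi3 X).IsHermitian := by
  ext i j
  fin_cases i <;> fin_cases j <;> simp [Psi3, hX.apply]

/-- Ψ₃ is a positive map: it sends positive semidefinite matrices to positive
semidefinite matrices. -/
theorem psi3_positive (X : Matrix (Fin 3) (Fin 3) ℂ) (hX : X.PosSemidef) :
    (Psi3 X).PosSemidef := by
  set d : Fin 3 → ℝ := fun i ↦ √(X i i).re
  have hd : ∀ i j, ‖X i j‖ ≤ d i * d j := hX.norm_apply_le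
  have hd' : ∀ i j, ‖X j i‖ ≤ d i * d j := fun i j ↦ mul_comm (d i) (d j) ▸ hd j i
  have hdd : ∀ i, d i ^ 2 = (X i i).re := fun i ↦
    Real.sq_sqrt (RCLike.nonneg_iff.1 hX.diag_nonneg).1
  refine (isHermitian_Psi3 hX.isHermitian).posSemidef_of_copositive_comparison
    (N := choiMatrix d) (fun _ ↦ choiMatrix_copositive fun _ ↦ Real.sqrt_nonneg _)
    (fun i ↦ ?_) (fun i j hij ↦ ?_)
  · fin_cases i <;> simp [choiMatrix, Psi3, hdd]
  · fin_cases i <;> fin_cases j <;> simp [choiMatrix, Psi3, hd, hd'] at hij ⊢
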